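/- For any convex body C in H^d and any supporting hyperplane H of C, the width of C determined by H equals the distance between H and the nearest equidistant hypersurface E to H such that C is contained in the convex hull of H ∪ E. -/

import Mathlib

/- We formalize hyperbolic space `H^d` via the Beltrami–Klein model: the open
unit ball of `ℝ^d`, where hyperbolic geodesic segments are exactly Euclidean
segments (so hyperbolic convexity = Euclidean convexity), hyperplanes are
chords of affine hyperplanes, and the hyperbolic distance is given by the
Cayley–Klein formula `cosh d(x,y) = (1 - ⟪x,y⟫)/√((1-‖x‖²)(1-‖y‖²))`. -/

noncomputable section
open Metric Set RealInnerProductSpace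

namespace Hyp

abbrev E (d : ℕ) := EuclideanSpace ℝ (Fin d)

/-- The Klein model of `H^d`: the open unit ball. -/
def ball01 (d : ℕ) : Set (E d) := Metric.ball 0 1

/-- Inverse hyperbolic cosine. -/
def acosh (z : ℝ) : ℝ := Real.log (z + Real.sqrt (z ^ 2 - 1))

/-- Hyperbolic distance in the Beltrami–Klein model. -/
def hDist {d : ℕ} (x y : E d) : ℝ :=
  acosh ((1 - (inner ℝ x y : ℝ)) / (Real.sqrt (1 - ‖x‖ ^ 2) * Real.sqrt (1 - ‖y‖ ^ 2)))

/-- Hyperbolic diameter of a set. -/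
def hDiam {d : ℕ} (C : Set (E d)) : ℝ :=
  sSup {r | ∃ a ∈ C, ∃ b ∈ C, hDist a b = r}

/-- Hyperbolic (infimal) distance between two sets. -/
def hSetDist {d : ℕ} (A B : Set (E d)) : ℝ :=
  sInf {r | ∃ a ∈ A, ∃ b ∈ B, hDist a b = r}

/-- Hyperbolic distance from a point to a set. -/
def hPointDist {d : ℕ} (x : E d) (A : Set (E d)) : ℝ :=
  sInf {r | ∃ a ∈ A, hDist x a = r}

/-- Closed hyperbolic ball of radius `r` about `x`. -/
def hBall {d : ℕ} (x : E d) (r : ℝ) : Set (E d) :=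
  {y ∈ ball01 d | hDist x y ≤ r}

/-- A convex body in `H^d`: compact, convex (hyperbolically, i.e. in the Klein
model also Euclidean-convex), with nonempty interior, inside the model. -/
def IsBody {d : ℕ} (C : Set (E d)) : Prop :=
  IsCompact C ∧ Convex ℝ C ∧ (interior C).Nonempty ∧ C ⊆ ball01 d

/-- A hyperplane of `H^d` in the Klein model: a chord `{x ∈ B | ⟪u,x⟫ = c}` of
the unit ball, with `‖u‖ = 1` and `|c| < 1` (so the chord is nonempty). -/
structure HPlane (d : ℕ) where
  u : E d
  c : ℝ
  norm_u : ‖u‖ = 1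
  abs_c : |c| < 1

/-- The underlying set of points of a hyperplane. -/
def HPlane.carrier {d : ℕ} (H : HPlane d) : Set (E d) :=
  {x ∈ ball01 d | (inner ℝ H.u x : ℝ) = H.c}

/-- `H` supports `C`: they meet and `C` lies in the closed half-space
`⟪u,·⟫ ≤ c` (an orientation of the normal is chosen accordingly). -/
def Supports {d : ℕ} (H : HPlane d) (C : Set (E d)) : Prop :=
  (H.carrier ∩ C).Nonempty ∧ ∀ x ∈ C, (inner ℝ H.u x : ℝ) ≤ H.c

/-- Two hyperplanes are ultraparallel iff their closures (in `ℝ^d`, hence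
including ideal boundary points) are disjoint. -/
def Ultraparallel {d : ℕ} (H K : HPlane d) : Prop :=
  closure H.carrier ∩ closure K.carrier = ∅

/-- The width of `C` determined by a supporting hyperplane `H`: the distance
from `H` to a farthest ultraparallel supporting hyperplane of `C`. -/
def hwidth {d : ℕ} (C : Set (E d)) (H : HPlane d) : ℝ :=
  sSup {r | ∃ K : HPlane d, Ultraparallel H K ∧ Supports K C ∧
    r = hSetDist H.carrier K.carrier}

/-- Thickness: the minimum width over all supporting hyperplanes. -/
def thickness {d : ℕ} (C : Set (E d)) : ℝ :=
  sInf {r | ∃ H : HPlane d, Supports H C ∧ r = hwidth C H}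

/-- A reduced body. -/
def IsReduced {d : ℕ} (R : Set (E d)) : Prop :=
  IsBody R ∧ ∀ Z : Set (E d), IsBody Z → Z ⊆ R → Z ≠ R → thickness Z < thickness R

/-- The equidistant hypersurface to `H` at distance `t`, on the side
`⟪u,·⟫ < c` (the side on which supported bodies lie). -/
def equiSurf {d : ℕ} (H : HPlane d) (t : ℝ) : Set (E d) :=
  {x ∈ ball01 d | (inner ℝ H.u x : ℝ) < H.c ∧ hPointDist x H.carrier = t}

/-- The distance from `H` to the nearest equidistant hypersurface `E` to `H`
with `C ⊆ conv(H ∪ E)` (the thickness of the equidistant strip `conv(H ∪ E)`). -/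
def equiLevel {d : ℕ} (C : Set (E d)) (H : HPlane d) : ℝ :=
  sInf {t | 0 < t ∧ C ⊆ convexHull ℝ (H.carrier ∪ equiSurf H t)}

/-- `E_H(C)`: the nearest equidistant hypersurface to `H` such that `C` is
contained in the equidistant strip `conv(H ∪ E_H(C))`. -/
def EH {d : ℕ} (C : Set (E d)) (H : HPlane d) : Set (E d) :=
  equiSurf H (equiLevel C H)

/-- A body of constant width `δ`. -/
def ConstWidth {d : ℕ} (C : Set (E d)) (δ : ℝ) : Prop :=
  ∀ H : HPlane d, Supports H C → hwidth C H = δ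

/-- A complete set of diameter `δ`: adding any point of `H^d` outside `C`
strictly increases the diameter. -/
def IsComplete {d : ℕ} (C : Set (E d)) (δ : ℝ) : Prop :=
  hDiam C = δ ∧ ∀ x ∈ ball01 d, x ∉ C → hDiam (insert x C) > δ

/-- The circular arc `P_c(a,b)`: points `g` at hyperbolic distance `δ` from `c`
whose (hyperbolic = Euclidean, in the Klein model) segment to `c` meets the
segment `ab`. -/
def arcP {d : ℕ} (c a b : E d) (δ : ℝ) : Set (E d) :=
  {g ∈ ball01 d | hDist c g = δ ∧ (segment ℝ c g ∩ segment ℝ a b).Nonempty}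

/-!
In the Klein model the distance from a point `x` on the supported side of `H = {⟪u, ·⟫ = c}`
to `H` is `arsinh (H.sinhDist x)`, where
`H.sinhDist x = (c - ⟪u, x⟫) / (√(1 - c²) √(1 - ‖x‖²))`. Since `x ↦ √(1 - ‖x‖²)` is concave,
the sublevel sets of `sinhDist`, bounded by the equidistant hypersurfaces to `H`, are convex.
Let `p ∈ C` maximize `sinhDist` on `C`, at distance `w` from `H`.

The hyperplane tangent at `p` to the equidistant hypersurface through `p` supports `C`, is
ultraparallel to `H` and lies beyond that hypersurface, so it is at distance exactly `w` from `H`;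
any other supporting hyperplane touches `C`, hence comes within `w` of `H`. So `width_H(C) = w`.

On the other hand `conv(H ∪ E_t)` lies in the sublevel set of level `sinh t`, which contains `p`
only if `t ≥ w`, while every point of `C` lies on a segment from a fixed point of `H` to a point
of `E_w` (on the ray through it, by the intermediate value theorem). So the nearest admissible
`E_t` is `E_w`.
-/

open Filter Topology

lemma acosh_eq_arsinh {z : ℝ} (hz : 1 ≤ z) : acosh z = Real.arsinh √(z ^ 2 - 1) := by
  rw [acosh, Real.arsinh, Real.sq_sqrt (by nlinarith), add_sub_cancel, Real.sqrt_sq (by linarith),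
    add_comm]

section KleinModel

variable {d : ℕ}

def sqrtOneSubNormSq (x : E d) : ℝ := √(1 - ‖x‖ ^ 2)

lemma sqrtOneSubNormSq_nonneg (x : E d) : 0 ≤ sqrtOneSubNormSq x := Real.sqrt_nonneg _

lemma sqrtOneSubNormSq_le_one (x : E d) : sqrtOneSubNormSq x ≤ 1 :=
  Real.sqrt_le_one.2 (by nlinarith [sq_nonneg ‖x‖])

lemma sq_sqrtOneSubNormSq {x : E d} (hx : ‖x‖ ≤ 1) : sqrtOneSubNormSq x ^ 2 = 1 - ‖x‖ ^ 2 :=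
  Real.sq_sqrt (by nlinarith [norm_nonneg x])

lemma sqrtOneSubNormSq_pos {x : E d} (hx : ‖x‖ < 1) : 0 < sqrtOneSubNormSq x :=
  Real.sqrt_pos.2 (by nlinarith [norm_nonneg x])

lemma norm_lt_one_of_sqrtOneSubNormSq_pos {x : E d} (hx : 0 < sqrtOneSubNormSq x) : ‖x‖ < 1 := by
  have := Real.sqrt_pos.1 hx
  nlinarith [norm_nonneg x]

lemma continuous_sqrtOneSubNormSq : Continuous (sqrtOneSubNormSq (d := d)) := by
  unfold sqrtOneSubNormSq
  fun_prop

lemma sqrtOneSubNormSq_mul_le {x y : E d} (hx : ‖x‖ ≤ 1) (hy : ‖y‖ ≤ 1) :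
    sqrtOneSubNormSq x * sqrtOneSubNormSq y ≤ 1 - ⟪x, y⟫ := by
  have hxy : ⟪x, y⟫ ≤ ‖x‖ * ‖y‖ := real_inner_le_norm x y
  calc sqrtOneSubNormSq x * sqrtOneSubNormSq y = √((1 - ‖x‖ ^ 2) * (1 - ‖y‖ ^ 2)) :=
        (Real.sqrt_mul (by nlinarith [norm_nonneg x]) _).symm
    _ ≤ √((1 - ‖x‖ * ‖y‖) ^ 2) := by
        gcongr; nlinarith [norm_nonneg x, norm_nonneg y, sq_nonneg (‖x‖ - ‖y‖)]
    _ = 1 - ‖x‖ * ‖y‖ := Real.sqrt_sq (by nlinarith [norm_nonneg x, norm_nonneg y])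
    _ ≤ 1 - ⟪x, y⟫ := by linarith

lemma concaveOn_sqrtOneSubNormSq :
    ConcaveOn ℝ (closedBall (0 : E d) 1) sqrtOneSubNormSq := by
  refine ⟨convex_closedBall 0 1, fun z₁ hz₁ z₂ hz₂ a b ha hb hab => ?_⟩
  rw [mem_closedBall_zero_iff] at hz₁ hz₂
  have hnorm : ‖a • z₁ + b • z₂‖ ^ 2 =
      a ^ 2 * ‖z₁‖ ^ 2 + 2 * (a * b * ⟪z₁, z₂⟫) + b ^ 2 * ‖z₂‖ ^ 2 := by
    rw [norm_add_sq_real, real_inner_smul_left, real_inner_smul_right, norm_smul, norm_smul,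
      Real.norm_eq_abs, Real.norm_eq_abs, mul_pow, mul_pow, sq_abs, sq_abs]
    ring
  have hsq : (a * sqrtOneSubNormSq z₁ + b * sqrtOneSubNormSq z₂) ^ 2 ≤
      1 - ‖a • z₁ + b • z₂‖ ^ 2 := by
    have := sqrtOneSubNormSq_mul_le hz₁ hz₂
    rw [hnorm]
    nlinarith [sq_sqrtOneSubNormSq hz₁, sq_sqrtOneSubNormSq hz₂, mul_nonneg ha hb]
  exact Real.le_sqrt_of_sq_le hsq

def coshDist (x y : E d) : ℝ :=
  (1 - ⟪x, y⟫) / (sqrtOneSubNormSq x * sqrtOneSubNormSq y)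

lemma one_le_coshDist {x y : E d} (hx : ‖x‖ < 1) (hy : ‖y‖ < 1) : 1 ≤ coshDist x y := by
  rw [coshDist, le_div_iff₀ (mul_pos (sqrtOneSubNormSq_pos hx) (sqrtOneSubNormSq_pos hy)),
    one_mul]
  exact sqrtOneSubNormSq_mul_le hx.le hy.le

lemma hDist_eq_arsinh {x y : E d} (hx : ‖x‖ < 1) (hy : ‖y‖ < 1) :
    hDist x y = Real.arsinh √(coshDist x y ^ 2 - 1) :=
  acosh_eq_arsinh (one_le_coshDist hx hy)

lemma hDist_comm (x y : E d) : hDist x y = hDist y x := by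
  rw [hDist, hDist, real_inner_comm, mul_comm]

lemma hDist_nonneg {x y : E d} (hx : ‖x‖ < 1) (hy : ‖y‖ < 1) : 0 ≤ hDist x y := by
  rw [hDist_eq_arsinh hx hy, Real.arsinh_nonneg_iff]
  exact Real.sqrt_nonneg _

end KleinModel

/- In the next two lemmas `x = m • u + x'` and `a = c • u + a'` with `x', a' ⟂ u`, `‖u‖ = 1`,
`α = ‖x'‖`, `β = ‖a'‖` and `τ = ⟪x', a'⟫`, for `a` on the hyperplane `⟪u, ·⟫ = c`; at the foot of
the perpendicular from `x`, `a' = t • x'`. -/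

lemma dist_hyperplane_coords_le {c m α β τ : ℝ} (hc : c ^ 2 < 1) (hx : m ^ 2 + α ^ 2 < 1)
    (ha : c ^ 2 + β ^ 2 < 1) (hτ : τ ≤ α * β) :
    ((1 - c ^ 2) * (1 - (m ^ 2 + α ^ 2)) + (c - m) ^ 2) * (1 - (c ^ 2 + β ^ 2)) ≤
      (1 - c ^ 2) * (1 - (m * c + τ)) ^ 2 := by
  have hN : (1 - c ^ 2) * (1 - (m ^ 2 + α ^ 2)) + (c - m) ^ 2 =
      (1 - m * c) ^ 2 - (1 - c ^ 2) * α ^ 2 := by ring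
  have hαβ : α * β ≤ 1 - m * c := by
    nlinarith [sq_nonneg (α * β - (1 - m * c)), sq_nonneg (c - m)]
  have hsq : (1 - m * c - α * β) ^ 2 ≤ (1 - (m * c + τ)) ^ 2 := by
    apply pow_le_pow_left₀ <;> linarith
  rw [hN]
  nlinarith [sq_nonneg ((1 - m * c) * β - (1 - c ^ 2) * α)]

lemma dist_hyperplane_coords_foot {c m α t : ℝ} (ht : t * (1 - m * c) = 1 - c ^ 2)
    (hX : 1 - (m ^ 2 + α ^ 2) ≠ 0) (hQ : 1 - m * c - t * α ^ 2 ≠ 0) (hk : 1 - c ^ 2 ≠ 0) :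
    (1 - (m * c + t * α ^ 2)) ^ 2 / ((1 - (m ^ 2 + α ^ 2)) * (1 - (c ^ 2 + t ^ 2 * α ^ 2))) =
      1 + (c - m) ^ 2 / ((1 - c ^ 2) * (1 - (m ^ 2 + α ^ 2))) := by
  have h1 : 1 - (c ^ 2 + t ^ 2 * α ^ 2) = t * (1 - m * c - t * α ^ 2) := by
    linear_combination -ht
  have h2 : (1 - c ^ 2) * (1 - (m ^ 2 + α ^ 2)) + (c - m) ^ 2 =
      (1 - m * c) * (1 - m * c - t * α ^ 2) := by
    linear_combination α ^ 2 * ht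
  have hP : 1 - m * c ≠ 0 := fun h => hk (by rw [← ht, h, mul_zero])
  have htne : t ≠ 0 := fun h => hk (by rw [← ht, h, zero_mul])
  rw [h1, one_add_div (mul_ne_zero hk hX), h2, ← ht, sub_add_eq_sub_sub]
  field_simp

section Hyperplane

variable {d : ℕ}

namespace HPlane

variable (H : HPlane d)

lemma mem_carrier {x : E d} : x ∈ H.carrier ↔ ‖x‖ < 1 ∧ ⟪H.u, x⟫ = H.c := by
  simp [carrier, ball01]

lemma sq_c_lt_one : H.c ^ 2 < 1 := by
  nlinarith [abs_lt.1 H.abs_c]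

lemma inner_eq (y z : E d) :
    ⟪y, z⟫ = ⟪H.u, y⟫ * ⟪H.u, z⟫ + ⟪y - ⟪H.u, y⟫ • H.u, z - ⟪H.u, z⟫ • H.u⟫ := by
  have huu : ⟪H.u, H.u⟫ = 1 := by rw [real_inner_self_eq_norm_sq, H.norm_u, one_pow]
  simp only [inner_sub_left, inner_sub_right, real_inner_smul_left, real_inner_smul_right, huu,
    real_inner_comm H.u]
  ring

lemma norm_sq_eq (y : E d) : ‖y‖ ^ 2 = ⟪H.u, y⟫ ^ 2 + ‖y - ⟪H.u, y⟫ • H.u‖ ^ 2 := by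
  rw [← real_inner_self_eq_norm_sq, ← real_inner_self_eq_norm_sq, H.inner_eq, sq]

def gap (x : E d) : ℝ := H.c - ⟪H.u, x⟫

def sinhDist (x : E d) : ℝ := H.gap x / (√(1 - H.c ^ 2) * sqrtOneSubNormSq x)

end HPlane

variable {H : HPlane d} {x : E d}

lemma coshDist_sq {x y : E d} (hx : ‖x‖ ≤ 1) (hy : ‖y‖ ≤ 1) :
    coshDist x y ^ 2 = (1 - ⟪x, y⟫) ^ 2 / ((1 - ‖x‖ ^ 2) * (1 - ‖y‖ ^ 2)) := by
  rw [coshDist, div_pow, mul_pow, sq_sqrtOneSubNormSq hx, sq_sqrtOneSubNormSq hy]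

lemma HPlane.sinhDist_sq (hx : ‖x‖ ≤ 1) :
    H.sinhDist x ^ 2 = H.gap x ^ 2 / ((1 - H.c ^ 2) * (1 - ‖x‖ ^ 2)) := by
  rw [HPlane.sinhDist, div_pow, mul_pow, sq_sqrtOneSubNormSq hx,
    Real.sq_sqrt (sub_nonneg.2 H.sq_c_lt_one.le)]

lemma one_add_sinhDist_sq_le_coshDist_sq (hx : ‖x‖ < 1) {a : E d} (ha : a ∈ H.carrier) :
    1 + H.sinhDist x ^ 2 ≤ coshDist x a ^ 2 := by
  obtain ⟨ha1, hac⟩ := H.mem_carrier.1 ha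
  have hk := H.sq_c_lt_one
  have hxn := H.norm_sq_eq x
  have han := H.norm_sq_eq a
  have hxa := H.inner_eq x a
  rw [hac] at han hxa
  have hx2 : ‖x‖ ^ 2 < 1 := by nlinarith [norm_nonneg x]
  have ha2 : ‖a‖ ^ 2 < 1 := by nlinarith [norm_nonneg a]
  have key := dist_hyperplane_coords_le hk (hxn ▸ hx2) (han ▸ ha2)
    (real_inner_le_norm (x - ⟪H.u, x⟫ • H.u) (a - H.c • H.u))
  rw [H.sinhDist_sq hx.le, coshDist_sq hx.le ha1.le, HPlane.gap,
    one_add_div (by nlinarith), div_le_div_iff₀ (by nlinarith) (by nlinarith)]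
  rw [hxn, han, hxa]
  nlinarith

lemma exists_coshDist_sq_eq (hx : ‖x‖ < 1) :
    ∃ a ∈ H.carrier, coshDist x a ^ 2 = 1 + H.sinhDist x ^ 2 := by
  set m := ⟪H.u, x⟫
  set xp := x - m • H.u
  set t := (1 - H.c ^ 2) / (1 - m * H.c)
  have hk : 0 < 1 - H.c ^ 2 := by linarith [H.sq_c_lt_one]
  have hxn : ‖x‖ ^ 2 = m ^ 2 + ‖xp‖ ^ 2 := H.norm_sq_eq x
  have hX : 0 < 1 - (m ^ 2 + ‖xp‖ ^ 2) := by nlinarith [norm_nonneg x]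
  have hP : 0 < 1 - m * H.c := by nlinarith [sq_nonneg (H.c - m)]
  have ht : t * (1 - m * H.c) = 1 - H.c ^ 2 := div_mul_cancel₀ _ hP.ne'
  have hQ : 0 < 1 - m * H.c - t * ‖xp‖ ^ 2 := by
    rw [← mul_lt_mul_iff_of_pos_left hP, mul_zero]
    nlinarith [sq_nonneg (H.c - m)]
  -- the foot of the hyperbolic perpendicular from `x`
  set a := H.c • H.u + t • xp
  have hua : ⟪H.u, a⟫ = H.c := by
    simp only [a, xp, inner_add_right, inner_sub_right, real_inner_smul_right,
      real_inner_self_eq_norm_sq, H.norm_u]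
    ring
  have hap : a - ⟪H.u, a⟫ • H.u = t • xp := by rw [hua]; simp only [a, add_sub_cancel_left]
  have han : ‖a‖ ^ 2 = H.c ^ 2 + t ^ 2 * ‖xp‖ ^ 2 := by
    rw [H.norm_sq_eq a, hap, hua, norm_smul, mul_pow, Real.norm_eq_abs, sq_abs]
  have hxa : ⟪x, a⟫ = m * H.c + t * ‖xp‖ ^ 2 := by
    rw [H.inner_eq x a, hap, hua, real_inner_smul_right, real_inner_self_eq_norm_sq]
  have ha1 : ‖a‖ < 1 := by
    have : 0 < t * (1 - m * H.c - t * ‖xp‖ ^ 2) := mul_pos (div_pos hk hP) hQ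
    nlinarith [norm_nonneg a]
  refine ⟨a, H.mem_carrier.2 ⟨ha1, hua⟩, ?_⟩
  rw [coshDist_sq hx.le ha1.le, H.sinhDist_sq hx.le, HPlane.gap, hxa, han, hxn]
  exact dist_hyperplane_coords_foot ht hX.ne' hQ.ne' hk.ne'

lemma isLeast_hDist_carrier (hx : ‖x‖ < 1) :
    IsLeast {r | ∃ a ∈ H.carrier, hDist x a = r} (Real.arsinh |H.sinhDist x|) := by
  refine ⟨?_, ?_⟩
  · obtain ⟨a, ha, hxa⟩ := exists_coshDist_sq_eq (H := H) hx
    refine ⟨a, ha, ?_⟩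
    rw [hDist_eq_arsinh hx (H.mem_carrier.1 ha).1, hxa, add_sub_cancel_left, Real.sqrt_sq_eq_abs]
  · rintro r ⟨a, ha, rfl⟩
    rw [hDist_eq_arsinh hx (H.mem_carrier.1 ha).1, Real.arsinh_le_arsinh, ← Real.sqrt_sq_eq_abs]
    exact Real.sqrt_le_sqrt (by linarith [one_add_sinhDist_sq_le_coshDist_sq hx ha])

lemma hPointDist_carrier (hx : ‖x‖ < 1) :
    hPointDist x H.carrier = Real.arsinh |H.sinhDist x| :=
  (isLeast_hDist_carrier hx).csInf_eq

lemma HPlane.gap_eq_sinhDist_mul (hx : ‖x‖ < 1) :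
    H.gap x = H.sinhDist x * √(1 - H.c ^ 2) * sqrtOneSubNormSq x := by
  have : 0 < √(1 - H.c ^ 2) := Real.sqrt_pos.2 (by linarith [H.sq_c_lt_one])
  rw [HPlane.sinhDist, mul_assoc, div_mul_cancel₀ _ (mul_pos this (sqrtOneSubNormSq_pos hx)).ne']

lemma HPlane.sinhDist_pos (hx : ‖x‖ < 1) (hgap : 0 < H.gap x) : 0 < H.sinhDist x :=
  div_pos hgap (mul_pos (Real.sqrt_pos.2 (by linarith [H.sq_c_lt_one])) (sqrtOneSubNormSq_pos hx))

lemma HPlane.sinhDist_nonneg (hgap : 0 ≤ H.gap x) : 0 ≤ H.sinhDist x :=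
  div_nonneg hgap (mul_nonneg (Real.sqrt_nonneg _) (sqrtOneSubNormSq_nonneg x))

lemma HPlane.continuousOn_sinhDist : ContinuousOn H.sinhDist (ball01 d) := by
  refine ContinuousOn.div (by unfold HPlane.gap; fun_prop)
    (continuous_const.mul continuous_sqrtOneSubNormSq).continuousOn fun x hx => ?_
  exact (mul_pos (Real.sqrt_pos.2 (by linarith [H.sq_c_lt_one]))
    (sqrtOneSubNormSq_pos (mem_ball_zero_iff.1 hx))).ne'

lemma mem_equiSurf_iff {t : ℝ} :
    x ∈ equiSurf H t ↔ ‖x‖ < 1 ∧ 0 < H.gap x ∧ H.sinhDist x = Real.sinh t := by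
  simp only [equiSurf, ball01, mem_ofPred_eq, mem_ball_zero_iff, HPlane.gap, sub_pos]
  refine and_congr_right fun hx => and_congr_right fun hgap => ?_
  rw [hPointDist_carrier hx, abs_of_pos (H.sinhDist_pos hx (sub_pos.2 hgap))]
  exact ⟨fun h => h ▸ (Real.sinh_arsinh _).symm, fun h => h ▸ Real.arsinh_sinh t⟩

def HPlane.sublevel (H : HPlane d) (s : ℝ) : Set (E d) :=
  {z | ‖z‖ ≤ 1 ∧ H.gap z ≤ s * √(1 - H.c ^ 2) * sqrtOneSubNormSq z}

lemma HPlane.mem_sublevel_iff (hx : ‖x‖ < 1) {s : ℝ} : x ∈ H.sublevel s ↔ H.sinhDist x ≤ s := by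
  have : 0 < √(1 - H.c ^ 2) * sqrtOneSubNormSq x :=
    mul_pos (Real.sqrt_pos.2 (by linarith [H.sq_c_lt_one])) (sqrtOneSubNormSq_pos hx)
  rw [HPlane.sublevel, mem_ofPred_eq, HPlane.sinhDist, div_le_iff₀ this, mul_assoc]
  exact and_iff_right hx.le

lemma HPlane.gap_smul_add_smul (y z : E d) {a b : ℝ} (hab : a + b = 1) :
    H.gap (a • y + b • z) = a * H.gap y + b * H.gap z := by
  simp only [HPlane.gap, inner_add_right, real_inner_smul_right]
  linear_combination (-H.c) * hab

lemma HPlane.convex_sublevel {s : ℝ} (hs : 0 ≤ s) : Convex ℝ (H.sublevel s) := by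
  rintro y ⟨hy, hgy⟩ z ⟨hz, hgz⟩ a b ha hb hab
  have hy' : y ∈ closedBall (0 : E d) 1 := mem_closedBall_zero_iff.2 hy
  have hz' : z ∈ closedBall (0 : E d) 1 := mem_closedBall_zero_iff.2 hz
  refine ⟨mem_closedBall_zero_iff.1 (convex_closedBall 0 1 hy' hz' ha hb hab), ?_⟩
  have hσ : 0 ≤ s * √(1 - H.c ^ 2) := mul_nonneg hs (Real.sqrt_nonneg _)
  calc H.gap (a • y + b • z) = a * H.gap y + b * H.gap z := H.gap_smul_add_smul y z hab
    _ ≤ s * √(1 - H.c ^ 2) * (a * sqrtOneSubNormSq y + b * sqrtOneSubNormSq z) := by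
        nlinarith [mul_le_mul_of_nonneg_left hgy ha, mul_le_mul_of_nonneg_left hgz hb]
    _ ≤ s * √(1 - H.c ^ 2) * sqrtOneSubNormSq (a • y + b • z) :=
        mul_le_mul_of_nonneg_left (concaveOn_sqrtOneSubNormSq.2 hy' hz' ha hb hab) hσ

lemma HPlane.convexHull_subset_sublevel {t : ℝ} (ht : 0 ≤ t) :
    convexHull ℝ (H.carrier ∪ equiSurf H t) ⊆ H.sublevel (Real.sinh t) := by
  refine convexHull_min (union_subset ?_ ?_) (H.convex_sublevel (Real.sinh_nonneg_iff.2 ht))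
  · intro z hz
    obtain ⟨hz1, hzc⟩ := H.mem_carrier.1 hz
    refine ⟨hz1.le, ?_⟩
    rw [HPlane.gap, hzc, sub_self]
    exact mul_nonneg (mul_nonneg (Real.sinh_nonneg_iff.2 ht) (Real.sqrt_nonneg _))
      (sqrtOneSubNormSq_nonneg z)
  · intro z hz
    obtain ⟨hz1, -, hzt⟩ := mem_equiSurf_iff.1 hz
    exact (H.mem_sublevel_iff hz1).2 hzt.le

lemma HPlane.smul_u_mem_carrier : H.c • H.u ∈ H.carrier := by
  refine H.mem_carrier.2 ⟨?_, ?_⟩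
  · rw [norm_smul, H.norm_u, mul_one, Real.norm_eq_abs]
    exact H.abs_c
  · rw [real_inner_smul_right, real_inner_self_eq_norm_sq, H.norm_u]
    ring

lemma HPlane.closure_carrier_subset :
    closure H.carrier ⊆ {z | ‖z‖ ≤ 1 ∧ ⟪H.u, z⟫ = H.c} :=
  closure_minimal (fun _ hz => ⟨(H.mem_carrier.1 hz).1.le, (H.mem_carrier.1 hz).2⟩)
    ((isClosed_le continuous_norm continuous_const).inter
      (isClosed_eq (continuous_const.inner continuous_id) continuous_const))

lemma ultraparallel_of_forall_ne {K : HPlane d}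
    (h : ∀ z : E d, ‖z‖ ≤ 1 → ⟪H.u, z⟫ = H.c → ⟪K.u, z⟫ ≠ K.c) : Ultraparallel H K := by
  refine eq_empty_iff_forall_notMem.2 fun z ⟨hzH, hzK⟩ => ?_
  obtain ⟨hz, hzc⟩ := H.closure_carrier_subset hzH
  exact h z hz hzc (K.closure_carrier_subset hzK).2

def HPlane.ofNormal (v : E d) (hv : v ≠ 0) (p : E d) (hp : ‖p‖ < 1) : HPlane d where
  u := ‖v‖⁻¹ • v
  c := ⟪‖v‖⁻¹ • v, p⟫
  norm_u := by rw [norm_smul, norm_inv, norm_norm, inv_mul_cancel₀ (norm_ne_zero_iff.2 hv)]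
  abs_c := by
    refine (abs_real_inner_le_norm _ _).trans_lt ?_
    rwa [norm_smul, norm_inv, norm_norm, inv_mul_cancel₀ (norm_ne_zero_iff.2 hv), one_mul]

lemma HPlane.inner_ofNormal_sub {v : E d} (hv : v ≠ 0) {p : E d} (hp : ‖p‖ < 1) (z : E d) :
    ⟪(ofNormal v hv p hp).u, z⟫ - (ofNormal v hv p hp).c = ‖v‖⁻¹ * ⟪v, z - p⟫ := by
  simp only [ofNormal, real_inner_smul_left, inner_sub_right]
  ring

lemma HPlane.inner_ofNormal_le_iff {v : E d} (hv : v ≠ 0) {p : E d} (hp : ‖p‖ < 1) {z : E d} :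
    ⟪(ofNormal v hv p hp).u, z⟫ ≤ (ofNormal v hv p hp).c ↔ ⟪v, z - p⟫ ≤ 0 := by
  rw [← sub_nonpos, inner_ofNormal_sub, ← neg_nonneg, ← mul_neg,
    mul_nonneg_iff_of_pos_left (inv_pos.2 (norm_pos_iff.2 hv)), neg_nonneg]

lemma HPlane.inner_ofNormal_eq_iff {v : E d} (hv : v ≠ 0) {p : E d} (hp : ‖p‖ < 1) {z : E d} :
    ⟪(ofNormal v hv p hp).u, z⟫ = (ofNormal v hv p hp).c ↔ ⟪v, z - p⟫ = 0 := by
  rw [← sub_eq_zero, inner_ofNormal_sub, mul_eq_zero,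
    or_iff_right (inv_ne_zero (norm_ne_zero_iff.2 hv))]

/-- Up to the factor `sqrtOneSubNormSq p`, the gradient at `p` of `H.gap - σ • sqrtOneSubNormSq`,
whose zero set is the equidistant hypersurface to `H` through `p`. -/
def HPlane.equidistantNormal (H : HPlane d) (σ : ℝ) (p : E d) : E d :=
  σ • p - sqrtOneSubNormSq p • H.u

section EquidistantNormal

variable {σ : ℝ} {p : E d}

lemma inner_equidistantNormal_sub (hp : ‖p‖ ≤ 1) (hgap : H.gap p = σ * sqrtOneSubNormSq p)
    (z : E d) :
    ⟪H.equidistantNormal σ p, z - p⟫ = sqrtOneSubNormSq p * H.gap z + σ * (⟪p, z⟫ - 1) := by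
  simp only [HPlane.equidistantNormal, HPlane.gap, inner_sub_left, inner_sub_right,
    real_inner_smul_left, real_inner_self_eq_norm_sq] at hgap ⊢
  linear_combination (-σ) * sq_sqrtOneSubNormSq hp - sqrtOneSubNormSq p * hgap

lemma inner_equidistantNormal_sub_le (hσ : 0 ≤ σ) (hp : ‖p‖ ≤ 1)
    (hgap : H.gap p = σ * sqrtOneSubNormSq p) {z : E d} (hz : ‖z‖ ≤ 1) :
    ⟪H.equidistantNormal σ p, z - p⟫ ≤ sqrtOneSubNormSq p * (H.gap z - σ * sqrtOneSubNormSq z) := by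
  rw [inner_equidistantNormal_sub hp hgap]
  nlinarith [sqrtOneSubNormSq_mul_le hp hz]

lemma inner_equidistantNormal_sub_neg (hσ : 0 < σ) (hp : ‖p‖ < 1)
    (hgap : H.gap p = σ * sqrtOneSubNormSq p) {z : E d} (hz : ‖z‖ ≤ 1) (hzc : ⟪H.u, z⟫ = H.c) :
    ⟪H.equidistantNormal σ p, z - p⟫ < 0 := by
  rw [inner_equidistantNormal_sub hp.le hgap, HPlane.gap, hzc, sub_self, mul_zero, zero_add]
  refine mul_neg_of_pos_of_neg hσ ?_
  nlinarith [real_inner_le_norm p z, norm_nonneg p, norm_nonneg z]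

end EquidistantNormal

lemma HPlane.le_sinhDist_of_mul_le (hx : ‖x‖ < 1) {s : ℝ}
    (h : s * √(1 - H.c ^ 2) * sqrtOneSubNormSq x ≤ H.gap x) : s ≤ H.sinhDist x := by
  rw [H.gap_eq_sinhDist_mul hx, mul_assoc, mul_assoc] at h
  exact le_of_mul_le_mul_right h
    (mul_pos (Real.sqrt_pos.2 (by linarith [H.sq_c_lt_one])) (sqrtOneSubNormSq_pos hx))

variable {C : Set (E d)} {p : E d}

lemma exists_ultraparallel_supports (hC : C ⊆ ball01 d) (hpC : p ∈ C)
    (hmax : IsMaxOn H.sinhDist C p) (hpos : 0 < H.sinhDist p) :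
    ∃ K : HPlane d, Ultraparallel H K ∧ Supports K C ∧ p ∈ K.carrier ∧
      ∀ b ∈ K.carrier, H.sinhDist p ≤ H.sinhDist b := by
  have hp : ‖p‖ < 1 := mem_ball_zero_iff.1 (hC hpC)
  set σ := H.sinhDist p * √(1 - H.c ^ 2)
  have hσ : 0 < σ := mul_pos hpos (Real.sqrt_pos.2 (by linarith [H.sq_c_lt_one]))
  have hgap := H.gap_eq_sinhDist_mul hp
  set v := H.equidistantNormal σ p
  have hle : ∀ z : E d, ‖z‖ ≤ 1 →
      ⟪v, z - p⟫ ≤ sqrtOneSubNormSq p * (H.gap z - σ * sqrtOneSubNormSq z) :=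
    fun z => inner_equidistantNormal_sub_le hσ.le hp.le hgap
  have hneg : ∀ z : E d, ‖z‖ ≤ 1 → ⟪H.u, z⟫ = H.c → ⟪v, z - p⟫ < 0 :=
    fun z => inner_equidistantNormal_sub_neg hσ hp hgap
  have hv : v ≠ 0 := fun h => by
    obtain ⟨h1, h2⟩ := H.mem_carrier.1 H.smul_u_mem_carrier
    simpa [h] using hneg _ h1.le h2
  have hpK : p ∈ (HPlane.ofNormal v hv p hp).carrier :=
    (HPlane.mem_carrier _).2 ⟨hp, (HPlane.inner_ofNormal_eq_iff hv hp).2 (by simp)⟩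
  refine ⟨HPlane.ofNormal v hv p hp, ultraparallel_of_forall_ne fun z hz hzc hzK => ?_,
    ⟨⟨p, hpK, hpC⟩, fun z hz => ?_⟩, hpK, fun b hb => ?_⟩
  · exact (hneg z hz hzc).ne ((HPlane.inner_ofNormal_eq_iff hv hp).1 hzK)
  · have hz1 : ‖z‖ < 1 := mem_ball_zero_iff.1 (hC hz)
    have hzs := ((H.mem_sublevel_iff hz1).2 (isMaxOn_iff.1 hmax z hz)).2
    refine (HPlane.inner_ofNormal_le_iff hv hp).2 ((hle z hz1.le).trans ?_)
    exact mul_nonpos_of_nonneg_of_nonpos (sqrtOneSubNormSq_nonneg p) (sub_nonpos.2 hzs)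
  · obtain ⟨hb1, hbc⟩ := (HPlane.mem_carrier _).1 hb
    have := hle b hb1.le
    rw [(HPlane.inner_ofNormal_eq_iff hv hp).1 hbc,
      mul_nonneg_iff_of_pos_left (sqrtOneSubNormSq_pos hp), sub_nonneg] at this
    exact H.le_sinhDist_of_mul_le hb1 this

lemma hSetDist_carrier_le {K : HPlane d} {q : E d} (hq : q ∈ K.carrier) :
    hSetDist H.carrier K.carrier ≤ Real.arsinh |H.sinhDist q| := by
  obtain ⟨a, ha, hqa⟩ := (isLeast_hDist_carrier (H := H) (K.mem_carrier.1 hq).1).1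
  refine csInf_le ⟨0, ?_⟩ ⟨a, ha, q, hq, by rw [hDist_comm, hqa]⟩
  rintro r ⟨a, ha, b, hb, rfl⟩
  exact hDist_nonneg (H.mem_carrier.1 ha).1 (K.mem_carrier.1 hb).1

lemma hSetDist_carrier_eq {K : HPlane d} (hpK : p ∈ K.carrier) (hp : 0 ≤ H.sinhDist p)
    (hK : ∀ b ∈ K.carrier, H.sinhDist p ≤ H.sinhDist b) :
    hSetDist H.carrier K.carrier = Real.arsinh (H.sinhDist p) := by
  refine IsLeast.csInf_eq ⟨?_, ?_⟩
  · obtain ⟨a, ha, hpa⟩ := (isLeast_hDist_carrier (H := H) (K.mem_carrier.1 hpK).1).1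
    exact ⟨a, ha, p, hpK, by rw [hDist_comm, hpa, abs_of_nonneg hp]⟩
  · rintro r ⟨a, ha, b, hb, rfl⟩
    rw [hDist_comm]
    refine le_trans ?_ ((isLeast_hDist_carrier (K.mem_carrier.1 hb).1).2 ⟨a, ha, rfl⟩)
    exact Real.arsinh_le_arsinh.2 ((hK b hb).trans (le_abs_self _))

lemma hwidth_eq_arsinh (hC : C ⊆ ball01 d) (hH : Supports H C) (hpC : p ∈ C)
    (hmax : IsMaxOn H.sinhDist C p) (hpos : 0 < H.sinhDist p) :
    hwidth C H = Real.arsinh (H.sinhDist p) := by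
  obtain ⟨K, hHK, hKC, hpK, hK⟩ := exists_ultraparallel_supports hC hpC hmax hpos
  refine IsGreatest.csSup_eq ⟨⟨K, hHK, hKC, (hSetDist_carrier_eq hpK hpos.le hK).symm⟩, ?_⟩
  rintro r ⟨K', -, ⟨⟨q, hqK, hqC⟩, -⟩, rfl⟩
  refine (hSetDist_carrier_le hqK).trans (Real.arsinh_le_arsinh.2 ?_)
  rw [abs_of_nonneg (H.sinhDist_nonneg (sub_nonneg.2 (hH.2 q hqC)))]
  exact isMaxOn_iff.1 hmax q hqC

lemma HPlane.gap_lineMap {b : E d} (hb : b ∈ H.carrier) (x : E d) (r : ℝ) :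
    H.gap (AffineMap.lineMap b x r) = r * H.gap x := by
  rw [AffineMap.lineMap_apply_module, H.gap_smul_add_smul _ _ (sub_add_cancel 1 r), HPlane.gap,
    (H.mem_carrier.1 hb).2, sub_self, mul_zero, zero_add]

lemma exists_lineMap_mem_equiSurf {s : ℝ} (hs : 0 < s) {b : E d} (hb : b ∈ H.carrier)
    (hgap : 0 < H.gap x) (hxs : x ∈ H.sublevel s) :
    ∃ r : ℝ, 1 ≤ r ∧ AffineMap.lineMap b x r ∈ equiSurf H (Real.arsinh s) := by
  set σ := s * √(1 - H.c ^ 2)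
  have hσ : 0 < σ := mul_pos hs (Real.sqrt_pos.2 (by linarith [H.sq_c_lt_one]))
  set f : ℝ → ℝ := fun r =>
    r * H.gap x - σ * sqrtOneSubNormSq (AffineMap.lineMap b x r : E d)
  have hf : Continuous f := (continuous_id.mul continuous_const).sub (continuous_const.mul
    (continuous_sqrtOneSubNormSq.comp AffineMap.lineMap_continuous))
  set R := max 1 (σ / H.gap x)
  have hf1 : f 1 ≤ 0 := by
    simp only [f, one_mul, AffineMap.lineMap_apply_one, sub_nonpos]
    exact hxs.2
  have hfR : 0 ≤ f R := by
    have : σ ≤ R * H.gap x := (div_le_iff₀ hgap).1 (le_max_right _ _)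
    have := mul_le_mul_of_nonneg_left (sqrtOneSubNormSq_le_one (AffineMap.lineMap b x R)) hσ.le
    simp only [f]
    linarith
  obtain ⟨r, ⟨hr1, -⟩, hr⟩ := intermediate_value_Icc (le_max_left 1 _) hf.continuousOn ⟨hf1, hfR⟩
  set z : E d := AffineMap.lineMap b x r
  have hgz : H.gap z = σ * sqrtOneSubNormSq z := by
    rw [H.gap_lineMap hb]
    exact sub_eq_zero.1 hr
  have hgz0 : 0 < H.gap z := by rw [H.gap_lineMap hb]; nlinarith
  have hz1 : ‖z‖ < 1 :=
    norm_lt_one_of_sqrtOneSubNormSq_pos (pos_of_mul_pos_right (hgz ▸ hgz0) hσ.le)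
  refine ⟨r, hr1, mem_equiSurf_iff.2 ⟨hz1, hgz0, ?_⟩⟩
  rw [Real.sinh_arsinh]
  refine le_antisymm ?_ (H.le_sinhDist_of_mul_le hz1 hgz.ge)
  exact (H.mem_sublevel_iff hz1).1 ⟨hz1.le, hgz.le⟩

lemma mem_convexHull_equiSurf {s : ℝ} (hs : 0 < s) (hx : ‖x‖ < 1) (hgap : 0 ≤ H.gap x)
    (hxs : x ∈ H.sublevel s) :
    x ∈ convexHull ℝ (H.carrier ∪ equiSurf H (Real.arsinh s)) := by
  rcases hgap.eq_or_lt with h0 | hpos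
  · refine subset_convexHull ℝ _ (Or.inl (H.mem_carrier.2 ⟨hx, ?_⟩))
    rw [HPlane.gap] at h0
    linarith
  · obtain ⟨r, hr, hz⟩ := exists_lineMap_mem_equiSurf hs H.smul_u_mem_carrier hpos hxs
    have hseg := segment_subset_convexHull (mem_union_left _ H.smul_u_mem_carrier)
      (mem_union_right _ hz) (lineMap_mem_segment ℝ _ _ ⟨by positivity, inv_le_one_of_one_le₀ hr⟩)
    rwa [AffineMap.lineMap_lineMap_right, inv_mul_cancel₀ (by positivity),
      AffineMap.lineMap_apply_one] at hseg

lemma equiLevel_eq_arsinh (hC : C ⊆ ball01 d) (hH : Supports H C) (hpC : p ∈ C)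
    (hmax : IsMaxOn H.sinhDist C p) (hpos : 0 < H.sinhDist p) :
    equiLevel C H = Real.arsinh (H.sinhDist p) := by
  refine IsLeast.csInf_eq ⟨⟨Real.arsinh_pos_iff.2 hpos, fun x hx => ?_⟩, ?_⟩
  · have hx1 : ‖x‖ < 1 := mem_ball_zero_iff.1 (hC hx)
    exact mem_convexHull_equiSurf hpos hx1 (sub_nonneg.2 (hH.2 x hx))
      ((H.mem_sublevel_iff hx1).2 (isMaxOn_iff.1 hmax x hx))
  · rintro t ⟨ht, hCt⟩
    have := (H.mem_sublevel_iff (mem_ball_zero_iff.1 (hC hpC))).1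
      (H.convexHull_subset_sublevel ht.le (hCt hpC))
    rw [← Real.arsinh_sinh t]
    exact Real.arsinh_le_arsinh.2 this

lemma exists_gap_pos (hint : (interior C).Nonempty) (hH : Supports H C) :
    ∃ y ∈ C, 0 < H.gap y := by
  obtain ⟨y, hy⟩ := hint
  have hlim : Tendsto (fun r : ℝ => y - r • H.u) (𝓝[>] 0) (𝓝 y) :=
    ((continuous_const.sub (continuous_id.smul continuous_const)).tendsto' 0 y
      (by simp)).mono_left nhdsWithin_le_nhds
  obtain ⟨r, hrC, hr⟩ :=
    ((hlim.eventually_mem (mem_interior_iff_mem_nhds.1 hy)).and self_mem_nhdsWithin).exists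
  refine ⟨_, hrC, ?_⟩
  have hgy : 0 ≤ H.gap y := sub_nonneg.2 (hH.2 y (interior_subset hy))
  have : H.gap (y - r • H.u) = H.gap y + r := by
    rw [HPlane.gap, HPlane.gap, inner_sub_right, real_inner_smul_right,
      real_inner_self_eq_norm_sq, H.norm_u]
    ring
  rw [this]
  exact add_pos_of_nonneg_of_pos hgy hr

end Hyperplane

/-- `width_H(C)` equals the distance from `H` to the nearest equidistant
hypersurface `E` to `H` with `C ⊆ conv(H ∪ E)`. -/
theorem hwidth_eq_equiLevel {d : ℕ} (C : Set (E d)) (hC : IsBody C)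
    (H : HPlane d) (hH : Supports H C) :
    hwidth C H = equiLevel C H := by
  obtain ⟨hcompact, -, hint, hball⟩ := hC
  obtain ⟨p, hpC, hmax⟩ := hcompact.exists_isMaxOn (hint.mono interior_subset)
    (H.continuousOn_sinhDist.mono hball)
  obtain ⟨y, hyC, hy⟩ := exists_gap_pos hint hH
  have hpos : 0 < H.sinhDist p :=
    (H.sinhDist_pos (mem_ball_zero_iff.1 (hball hyC)) hy).trans_le (isMaxOn_iff.1 hmax y hyC)
  rw [hwidth_eq_arsinh hball hH hpC hmax hpos, equiLevel_eq_arsinh hball hH hpC hmax hpos]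

end Hyp
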